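/- Let H₁, H₂, K₁, K₂ be closed subspaces of L² and ψ ∈ L∞. (a) If a₁ ∈ 𝒢L∞ with a₁K₁ = H₁, then a₁⁻¹·ker T_ψ^{H₁,H₂} = ker T_{ψa₁}^{K₁,H₂}. (b) If a₂ ∈ 𝒢L∞ with a₂K₂ = H₂, then ker T_ψ^{H₁,H₂} = ker T_{ā₂ψ}^{H₁,K₂}. -/

import Mathlib

open MeasureTheory

noncomputable section

/-! ## Setup: the circle, L², L∞, multiplication operators, Hardy space,
model spaces, and generalized Toeplitz operators -/

instance : Fact (0 < 2 * Real.pi) := ⟨by positivity⟩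

/-- The normalized Lebesgue (Haar) measure `dθ/2π` on the circle. -/
abbrev μH : Measure (AddCircle (2 * Real.pi)) := AddCircle.haarAddCircle

/-- The Lebesgue space `L²` of the circle. -/
abbrev L2 : Type := Lp ℂ 2 μH

/-- The space `L∞` of essentially bounded functions on the circle. -/
abbrev Linf : Type := Lp ℂ ⊤ μH

/-- Pointwise (a.e.) multiplication on `L∞`. -/
instance : Mul Linf :=
  ⟨fun f g => ((Lp.memLp g).smul (r := ⊤) (Lp.memLp f)).toLp (⇑f • ⇑g)⟩

/-- The constant function `1` as an element of `L∞`. -/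
instance : One Linf := ⟨(memLp_const (1 : ℂ)).toLp (fun _ => (1 : ℂ))⟩

/-- Complex conjugation on `L∞`. -/
instance : Star Linf :=
  ⟨fun f => ((Complex.conjCLE.toContinuousLinearMap).comp_memLp' (Lp.memLp f)).toLp
    ((starRingEnd ℂ) ∘ ⇑f)⟩

/-- Multiplication of an `L²` function by an `L∞` function. -/
def mulFun (φ : Linf) (f : L2) : L2 :=
  ((Lp.memLp f).smul (r := 2) (Lp.memLp φ)).toLp (⇑φ • ⇑f)

lemma mulFun_coe (φ : Linf) (f : L2) : mulFun φ f =ᵐ[μH] ⇑φ • ⇑f :=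
  MemLp.coeFn_toLp _

lemma mulFun_norm_le (φ : Linf) (f : L2) : ‖mulFun φ f‖ ≤ ‖φ‖ * ‖f‖ := by
  rw [mulFun, Lp.norm_toLp, Lp.norm_def, Lp.norm_def, ← ENNReal.toReal_mul]
  refine ENNReal.toReal_mono ?_ ?_
  · exact ENNReal.mul_ne_top (Lp.eLpNorm_ne_top φ) (Lp.eLpNorm_ne_top f)
  · exact eLpNorm_smul_le_eLpNorm_top_mul_eLpNorm 2 (Lp.aestronglyMeasurable f) ⇑φ

/-- The bounded multiplication operator `M_φ : L² → L²` for `φ ∈ L∞`. -/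
def mulCLM (φ : Linf) : L2 →L[ℂ] L2 :=
  LinearMap.mkContinuous
    { toFun := mulFun φ
      map_add' := by
        intro f g
        apply Lp.ext
        filter_upwards [mulFun_coe φ (f + g), mulFun_coe φ f, mulFun_coe φ g,
          Lp.coeFn_add f g, Lp.coeFn_add (mulFun φ f) (mulFun φ g)] with x h1 h2 h3 h4 h5
        simp only [Pi.smul_apply', Pi.add_apply] at *
        rw [h1, h5, h2, h3, h4]
        exact smul_add _ _ _
      map_smul' := by
        intro c f
        apply Lp.ext
        filter_upwards [mulFun_coe φ (c • f), mulFun_coe φ f,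
          Lp.coeFn_smul c f, Lp.coeFn_smul c (mulFun φ f)] with x h1 h2 h3 h4
        simp only [Pi.smul_apply', Pi.smul_apply, RingHom.id_apply] at *
        rw [h1, h4, h2, h3]
        exact smul_comm _ _ _ }
    ‖φ‖ (mulFun_norm_le φ)

/-- The image `a·K = {a f : f ∈ K}` of a subspace `K ⊆ L²` under multiplication by `a ∈ L∞`. -/
def smulSub (a : Linf) (K : Submodule ℂ L2) : Submodule ℂ L2 :=
  K.map (mulCLM a : L2 →ₗ[ℂ] L2)

/-- The Hardy space `H² = {f ∈ L² : f̂(n) = 0 for n < 0}`. -/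
def Hardy : Submodule ℂ L2 where
  carrier := {f | ∀ n : ℤ, n < 0 → fourierBasis.repr f n = 0}
  add_mem' := by
    intro f g hf hg n hn
    rw [map_add, lp.coeFn_add, Pi.add_apply, hf n hn, hg n hn, add_zero]
  zero_mem' := by
    intro n hn
    rw [map_zero, lp.coeFn_zero]
    rfl
  smul_mem' := by
    intro c f hf n hn
    rw [_root_.map_smul, lp.coeFn_smul, Pi.smul_apply, hf n hn, smul_zero]

lemma hardy_isClosed : IsClosed (Hardy : Set L2) := by
  have h : (Hardy : Set L2) =
      ⋂ n : {m : ℤ // m < 0}, {f : L2 | fourierBasis.repr f n.1 = 0} := by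
    ext f
    constructor
    · intro hf
      exact Set.mem_iInter.2 fun n => hf n.1 n.2
    · intro hf n hn
      exact Set.mem_iInter.1 hf ⟨n, hn⟩
  rw [h]
  refine isClosed_iInter fun n => isClosed_eq ?_ continuous_const
  have : (fun f : L2 => fourierBasis.repr f n.1) =
      fun f : L2 => (innerSL ℂ (fourierBasis n.1)) f := by
    funext f
    exact fourierBasis.repr_apply_apply f n.1
  rw [this]
  exact (innerSL ℂ (fourierBasis n.1)).continuous

instance : CompleteSpace Hardy := hardy_isClosed.completeSpace_coe

/-- The model space `K_θ = H² ⊖ θH² = H² ∩ (θH²)^⊥`. -/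
def modelSpace (θ : Linf) : Submodule ℂ L2 :=
  Hardy ⊓ (smulSub θ Hardy)ᗮ

instance (θ : Linf) : CompleteSpace (modelSpace θ) := by
  refine @IsClosed.completeSpace_coe _ _ _ _ ?_
  have h : (modelSpace θ : Set L2) = (Hardy : Set L2) ∩ ((smulSub θ Hardy)ᗮ : Set L2) := rfl
  rw [h]
  exact hardy_isClosed.inter (smulSub θ Hardy).isClosed_orthogonal

/-- The generalized Toeplitz operator `T_φ^{H₁,H₂} = P_{H₂} M_φ |_{H₁}`. -/
def genToeplitz (φ : Linf) (H₁ H₂ : Submodule ℂ L2) [CompleteSpace H₂] : H₁ →L[ℂ] H₂ :=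
  (H₂.orthogonalProjectionOnto).comp ((mulCLM φ).comp H₁.subtypeL)

/-- The orthogonal projection of `L²` onto `H`, viewed as an operator `L² → L²`. -/
def projL (H : Submodule ℂ L2) [CompleteSpace H] : L2 →L[ℂ] L2 :=
  H.subtypeL.comp (H.orthogonalProjectionOnto)

/-- `φ ∈ H∞`: all negative Fourier coefficients of `φ` vanish. -/
def IsHardyInf (φ : Linf) : Prop := ∀ n : ℤ, n < 0 → fourierCoeff (⇑φ) n = 0

/-- `θ` is an inner function: `θ ∈ H∞` and `|θ| = 1` a.e. on the circle. -/
def IsInner (θ : Linf) : Prop :=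
  IsHardyInf θ ∧ ∀ᵐ x ∂μH, ‖(θ : AddCircle (2 * Real.pi) → ℂ) x‖ = 1

/-- `a ∈ 𝒢H∞` with explicit inverse `b ∈ H∞`. -/
def GHinfPair (a b : Linf) : Prop := IsHardyInf a ∧ IsHardyInf b ∧ a * b = 1

/-- `a ∈ 𝒢H∞`: `a` is invertible in the algebra `H∞`. -/
def IsGHinf (a : Linf) : Prop := ∃ b, GHinfPair a b

/-- `b ∈ 𝒢H̄∞`: `b` is the conjugate of an element of `𝒢H∞`. -/
def IsGHinfBar (b : Linf) : Prop := ∃ c, IsGHinf c ∧ b = star c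

/-- `a ∈ 𝒢L∞` with explicit inverse `b`. -/
def GLinfPair (a b : Linf) : Prop := a * b = 1 ∧ b * a = 1

/-- `a ∈ 𝒢L∞`: `a` is invertible in the algebra `L∞`. -/
def IsGLinf (a : Linf) : Prop := ∃ b, GLinfPair a b

/-- The kernel of an operator between subspaces of `L²`, viewed as a subspace of `L²`. -/
def subKer {K₁ K₂ : Submodule ℂ L2} (T : K₁ →L[ℂ] K₂) : Submodule ℂ L2 :=
  (LinearMap.ker (T : K₁ →ₗ[ℂ] K₂)).map K₁.subtype

/-- The range of an operator between subspaces of `L²`, viewed as a subspace of `L²`. -/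
def subRan {K₁ K₂ : Submodule ℂ L2} (T : K₁ →L[ℂ] K₂) : Submodule ℂ L2 :=
  (LinearMap.range (T : K₁ →ₗ[ℂ] K₂)).map K₂.subtype

/-- The image of a subspace `S ⊆ K₁` under `T : K₁ → K₂`, viewed as a subspace of `L²`. -/
def opImage {K₁ K₂ : Submodule ℂ L2} (T : K₁ →L[ℂ] K₂) (S : Submodule ℂ K₁) :
    Submodule ℂ L2 :=
  (S.map (T : K₁ →ₗ[ℂ] K₂)).map K₂.subtype

section Antilinear

variable {E : Type*} [NormedAddCommGroup E] [InnerProductSpace ℂ E]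

/-- `C` is antilinear: `C(f + a g) = C f + ā C g`. -/
def IsAntilinearMap (C : E → E) : Prop :=
  ∀ (f g : E) (a : ℂ), C (f + a • g) = C f + (starRingEnd ℂ a) • C g

/-- `Cs` is the antilinear adjoint of `C`: `⟨C f, g⟩ = conj ⟨f, Cs g⟩`. -/
def IsAntilinearAdjointOf (C Cs : E → E) : Prop :=
  ∀ f g : E, (inner ℂ (C f) g : ℂ) = (starRingEnd ℂ) (inner ℂ f (Cs g) : ℂ)

/-- `C` is an antilinear unitary: it is antilinear and its antilinear adjoint is its inverse. -/
def IsAntilinearUnitary (C : E → E) : Prop :=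
  IsAntilinearMap C ∧ ∃ Cs : E → E, IsAntilinearAdjointOf C Cs ∧
    Function.LeftInverse Cs C ∧ Function.RightInverse Cs C

/-- `T` is complex selfadjoint with respect to `C` (with inverse `Cinv`): `C T C⁻¹ = T*`. -/
def IsComplexSelfadjointWith [CompleteSpace E] (T : E →L[ℂ] E) (C Cinv : E → E) : Prop :=
  ∀ f : E, C (T (Cinv f)) = ContinuousLinearMap.adjoint T f

end Antilinear

namespace Linf

lemma coeFn_mul (a b : Linf) : ⇑(a * b) =ᵐ[μH] ⇑a • ⇑b :=
  MemLp.coeFn_toLp _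

lemma coeFn_one : ⇑(1 : Linf) =ᵐ[μH] fun _ => (1 : ℂ) :=
  MemLp.coeFn_toLp _

lemma coeFn_star (a : Linf) : ⇑(star a) =ᵐ[μH] (starRingEnd ℂ) ∘ ⇑a :=
  MemLp.coeFn_toLp _

end Linf

lemma GLinfPair.symm {a b : Linf} (h : GLinfPair a b) : GLinfPair b a :=
  ⟨h.2, h.1⟩

lemma mulCLM_mul (a b : Linf) (f : L2) : mulCLM (a * b) f = mulCLM a (mulCLM b f) := by
  apply Lp.ext
  filter_upwards [mulFun_coe (a * b) f, mulFun_coe a (mulFun b f), mulFun_coe b f,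
    Linf.coeFn_mul a b] with x hab ha hb hmul
  change mulFun (a * b) f x = mulFun a (mulFun b f) x
  simp only [hab, ha, hb, hmul, Pi.smul_apply', smul_eq_mul, mul_assoc]

lemma mulCLM_one (f : L2) : mulCLM 1 f = f := by
  apply Lp.ext
  filter_upwards [mulFun_coe (1 : Linf) f, Linf.coeFn_one] with x h hone
  change mulFun (1 : Linf) f x = f x
  simp only [h, hone, Pi.smul_apply', smul_eq_mul, one_mul]

lemma mulCLM_mulCLM_of_mul_eq_one {a b : Linf} (h : a * b = 1) (f : L2) :
    mulCLM a (mulCLM b f) = f := by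
  rw [← mulCLM_mul, h, mulCLM_one]

lemma inner_mulCLM_star_left (a : Linf) (f g : L2) :
    inner ℂ (mulCLM (star a) f) g = inner ℂ f (mulCLM a g) := by
  rw [L2.inner_def, L2.inner_def]
  refine integral_congr_ae ?_
  filter_upwards [mulFun_coe (star a) f, mulFun_coe a g, Linf.coeFn_star a] with x hf hg hstar
  change inner ℂ (mulFun (star a) f x) (g x) = inner ℂ (f x) (mulFun a g x)
  simp only [hf, hg, hstar, Pi.smul_apply', smul_eq_mul, RCLike.inner_apply,
    Function.comp_apply, map_mul, starRingEnd_self_apply]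
  ring

lemma smulSub_eq_comap {a b : Linf} (h : GLinfPair a b) (S : Submodule ℂ L2) :
    smulSub a S = S.comap (mulCLM b : L2 →ₗ[ℂ] L2) := by
  ext x
  simp only [smulSub, Submodule.mem_map, Submodule.mem_comap, ContinuousLinearMap.coe_coe]
  constructor
  · rintro ⟨y, hy, rfl⟩
    rwa [mulCLM_mulCLM_of_mul_eq_one h.2]
  · exact fun hx => ⟨mulCLM b x, hx, mulCLM_mulCLM_of_mul_eq_one h.1 x⟩

lemma mulCLM_star_mem_orthogonal_iff (a : Linf) (K : Submodule ℂ L2) (f : L2) :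
    mulCLM (star a) f ∈ Kᗮ ↔ f ∈ (smulSub a K)ᗮ := by
  simp only [Submodule.mem_orthogonal', smulSub, Submodule.mem_map, ContinuousLinearMap.coe_coe,
    forall_exists_index, and_imp, forall_apply_eq_imp_iff₂, inner_mulCLM_star_left]

lemma mem_subKer_genToeplitz (φ : Linf) (H K : Submodule ℂ L2) [CompleteSpace K] (f : L2) :
    f ∈ subKer (genToeplitz φ H K) ↔ f ∈ H ∧ mulCLM φ f ∈ Kᗮ := by
  simp only [subKer, Submodule.mem_map, LinearMap.mem_ker, ContinuousLinearMap.coe_coe,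
    genToeplitz, ContinuousLinearMap.comp_apply, Submodule.subtypeL_apply,
    Submodule.orthogonalProjectionOnto_eq_zero_iff]
  constructor
  · rintro ⟨g, hg, rfl⟩
    exact ⟨g.2, hg⟩
  · rintro ⟨hf, hperp⟩
    exact ⟨⟨f, hf⟩, hperp, rfl⟩

lemma comap_subKer_genToeplitz_smulSub {a b : Linf} (h : GLinfPair a b) (ψ : Linf)
    (K H : Submodule ℂ L2) [CompleteSpace H] :
    (subKer (genToeplitz ψ (smulSub a K) H)).comap (mulCLM a : L2 →ₗ[ℂ] L2) =
      subKer (genToeplitz (ψ * a) K H) := by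
  ext f
  simp only [Submodule.mem_comap, mem_subKer_genToeplitz, smulSub_eq_comap h,
    ContinuousLinearMap.coe_coe, mulCLM_mulCLM_of_mul_eq_one h.2, mulCLM_mul]

lemma subKer_genToeplitz_smulSub_right (a ψ : Linf) (H K : Submodule ℂ L2)
    [CompleteSpace K] [CompleteSpace (smulSub a K)] :
    subKer (genToeplitz ψ H (smulSub a K)) = subKer (genToeplitz (star a * ψ) H K) := by
  ext f
  simp only [mem_subKer_genToeplitz, mulCLM_mul, mulCLM_star_mem_orthogonal_iff]

theorem statement14_general (H₁ H₂ K₁ K₂ : Submodule ℂ L2)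
    [CompleteSpace H₂] [CompleteSpace K₂]
    (ψ : Linf) :
    (∀ a₁ b₁ : Linf, GLinfPair a₁ b₁ → smulSub a₁ K₁ = H₁ →
      smulSub b₁ (subKer (genToeplitz ψ H₁ H₂)) =
        subKer (genToeplitz (ψ * a₁) K₁ H₂)) ∧
    (∀ a₂ : Linf, IsGLinf a₂ → smulSub a₂ K₂ = H₂ →
      subKer (genToeplitz ψ H₁ H₂) = subKer (genToeplitz (star a₂ * ψ) H₁ K₂)) := by
  refine ⟨fun a₁ b₁ hab hK => ?_, fun a₂ _ hK => ?_⟩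
  · subst hK
    rw [smulSub_eq_comap hab.symm, comap_subKer_genToeplitz_smulSub hab]
  · subst hK
    exact subKer_genToeplitz_smulSub_right a₂ ψ H₁ K₂

/-- Corollary 3.7: (a) if `a₁K₁ = H₁` then
`a₁⁻¹ ker T_ψ^{H₁,H₂} = ker T_{ψa₁}^{K₁,H₂}`; (b) if `a₂K₂ = H₂` then
`ker T_ψ^{H₁,H₂} = ker T_{ā₂ψ}^{H₁,K₂}`. -/
theorem statement14 (H₁ H₂ K₁ K₂ : Submodule ℂ L2)
    [CompleteSpace H₁] [CompleteSpace H₂] [CompleteSpace K₁] [CompleteSpace K₂]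
    (ψ : Linf) :
    (∀ a₁ b₁ : Linf, GLinfPair a₁ b₁ → smulSub a₁ K₁ = H₁ →
      smulSub b₁ (subKer (genToeplitz ψ H₁ H₂)) =
        subKer (genToeplitz (ψ * a₁) K₁ H₂)) ∧
    (∀ a₂ : Linf, IsGLinf a₂ → smulSub a₂ K₂ = H₂ →
      subKer (genToeplitz ψ H₁ H₂) = subKer (genToeplitz (star a₂ * ψ) H₁ K₂)) :=
  statement14_general H₁ H₂ K₁ K₂ ψ
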